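/- For every t ∈ (0,1), the series ∑_{i=1}^∞ X_1(t)^2 X_2(t)^2 ⋯ X_i(t)^2 converges. -/

import Mathlib

/-- Iterated logarithmic functions: `X 1 t = (1 - log t)⁻¹`, `X i = X 1 ∘ X (i-1)`. -/
noncomputable def X : ℕ → ℝ → ℝ
  | 0, t => t
  | n + 1, t => (1 - Real.log (X n t))⁻¹

/-!
Since `log x ≤ x - 1`, one step of the iteration gives `X (n + 1) ≤ (2 - X n)⁻¹`, i.e. the
quantity `(1 - X n)⁻¹` grows by at most `1` per step. Hence `X n ≤ 1 - (n + c)⁻¹` with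
`c = (1 - t)⁻¹`, the product `∏_{j ≤ n} X j` is dominated by the telescoping product
`c / (n + c)`, and its square by `c² / n²`.
-/

open Finset Real

lemma inv_one_sub_log_le_inv_two_sub {x : ℝ} (hx₀ : 0 < x) (hx₂ : x < 2) :
    (1 - log x)⁻¹ ≤ (2 - x)⁻¹ :=
  inv_anti₀ (by linarith) (by linarith [log_le_sub_one_of_pos hx₀])

lemma prod_Icc_one_sub_inv_add {c : ℝ} (hc : 0 < c) (n : ℕ) :
    ∏ j ∈ Icc 1 n, (1 - ((j : ℝ) + c)⁻¹) = c / (n + c) := by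
  induction n with
  | zero => simp [hc.ne']
  | succ n ih =>
    rw [prod_Icc_succ_top (Nat.le_add_left 1 n), ih]
    have : (n : ℝ) + c ≠ 0 := by positivity
    have : (n : ℝ) + 1 + c ≠ 0 := by positivity
    push_cast
    field_simp
    ring

lemma X_mem_Ioo {t : ℝ} (ht : t ∈ Set.Ioo 0 1) (n : ℕ) : X n t ∈ Set.Ioo 0 1 := by
  induction n with
  | zero => exact ht
  | succ n ih =>
    have hlog : log (X n t) < 0 := log_neg ih.1 ih.2
    exact ⟨inv_pos.2 (by linarith), inv_lt_one_of_one_lt₀ (by linarith)⟩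

lemma X_le_one_sub_inv {t : ℝ} (ht : t ∈ Set.Ioo 0 1) (n : ℕ) :
    X n t ≤ 1 - (n + (1 - t)⁻¹)⁻¹ := by
  have hc : 0 < (1 - t)⁻¹ := inv_pos.2 (by linarith [ht.2])
  induction n with
  | zero => simp [X]
  | succ n ih =>
    obtain ⟨hx₀, hx₁⟩ := X_mem_Ioo ht n
    have hn : 0 < (n : ℝ) + (1 - t)⁻¹ := by positivity
    calc X (n + 1) t ≤ (2 - X n t)⁻¹ := inv_one_sub_log_le_inv_two_sub hx₀ (by linarith)
      _ ≤ (1 + (n + (1 - t)⁻¹)⁻¹)⁻¹ := inv_anti₀ (by positivity) (by linarith)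
      _ = 1 - ((n + 1 : ℕ) + (1 - t)⁻¹)⁻¹ := by
        rw [Nat.cast_succ, add_right_comm]
        generalize (n : ℝ) + (1 - t)⁻¹ = a at hn ⊢
        field_simp
        ring

lemma prod_X_le {t : ℝ} (ht : t ∈ Set.Ioo 0 1) (n : ℕ) :
    ∏ j ∈ Icc 1 n, X j t ≤ (1 - t)⁻¹ / (n + (1 - t)⁻¹) := by
  rw [← prod_Icc_one_sub_inv_add (inv_pos.2 (sub_pos.2 ht.2))]
  exact prod_le_prod (fun j _ => (X_mem_Ioo ht j).1.le) (fun j _ => X_le_one_sub_inv ht j)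

theorem summable_prod_X_sq (t : ℝ) (ht : t ∈ Set.Ioo (0:ℝ) 1) :
    Summable (fun i : ℕ => ∏ j ∈ Finset.Icc 1 (i + 1), (X j t) ^ 2) := by
  set c := (1 - t)⁻¹
  have hc : 0 < c := inv_pos.2 (sub_pos.2 ht.2)
  have hsum : Summable (fun i : ℕ => c ^ 2 * (1 / ((i + 1 : ℕ) : ℝ) ^ 2)) :=
    ((summable_nat_add_iff 1).2 (summable_one_div_nat_pow.2 one_lt_two)).mul_left _
  refine hsum.of_nonneg_of_le (fun i => by positivity) (fun i => ?_)
  have hi : (0 : ℝ) < (i + 1 : ℕ) := by positivity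
  calc ∏ j ∈ Icc 1 (i + 1), X j t ^ 2 = (∏ j ∈ Icc 1 (i + 1), X j t) ^ 2 := prod_pow _ _ _
    _ ≤ (c / ((i + 1 : ℕ) + c)) ^ 2 :=
      pow_le_pow_left₀ (prod_nonneg fun j _ => (X_mem_Ioo ht j).1.le) (prod_X_le ht _) 2
    _ ≤ (c / (i + 1 : ℕ)) ^ 2 := by gcongr; linarith
    _ = c ^ 2 * (1 / ((i + 1 : ℕ) : ℝ) ^ 2) := by ring
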